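/- Let γ > 0 and let T be a real symmetric positive semidefinite matrix with operator norm strictly less than γ. Then I - γ⁻¹ T is invertible, and M := (I - γ⁻¹ T)⁻² is the unique symmetric positive definite matrix satisfying the first-order condition M^{-1/2} - I + γ⁻¹ T = 0, i.e. sqrt(M)⁻¹ = I - γ⁻¹ T. -/

import Mathlib

/-! The spectrum of `1 - γ⁻¹ T` is `1 - γ⁻¹ σ(T)`, and `σ(T) ⊆ [-‖T‖, ‖T‖]` with `‖T‖ < γ`, so
`A := 1 - γ⁻¹ T` is positive definite. Hence `A⁻¹` is a positive semidefinite square root of `A⁻²`,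
and uniqueness of positive square roots shows both that `sqrt (A⁻²) = A⁻¹` and that any positive
definite `M'` with `(sqrt M')⁻¹ = A` satisfies `M' = (sqrt M')² = A⁻²`. -/

open scoped Matrix.Norms.L2Operator

section

open scoped ComplexOrder

/-- The positive semidefinite square root of a positive semidefinite matrix
(the definition `Matrix.PosSemidef.sqrt` of the older Mathlib, since removed). -/
noncomputable def Matrix.PosSemidef.sqrt {n 𝕜 : Type*} [Fintype n] [RCLike 𝕜] [DecidableEq n]
    {A : Matrix n n 𝕜} (hA : A.PosSemidef) : Matrix n n 𝕜 :=
  hA.1.eigenvectorUnitary.1 * Matrix.diagonal ((↑) ∘ (√·) ∘ hA.1.eigenvalues) *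
  (star hA.1.eigenvectorUnitary : Matrix n n 𝕜)

end

open scoped MatrixOrder

theorem IsSelfAdjoint.isStrictlyPositive_one_sub {A : Type*} [NormedRing A] [StarRing A]
    [CStarRing A] [NormedAlgebra ℝ A] [CompleteSpace A] [PartialOrder A] [StarOrderedRing A]
    [NonnegSpectrumClass ℝ A] [ContinuousFunctionalCalculus ℝ A IsSelfAdjoint]
    {a : A} (ha : IsSelfAdjoint a) (h : ‖a‖ < 1) : IsStrictlyPositive (1 - a) := by
  nontriviality A
  rw [StarOrderedRing.isStrictlyPositive_iff_spectrum_pos (R := ℝ) _ ((IsSelfAdjoint.one A).sub ha)]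
  intro x hx
  rw [← map_one (algebraMap ℝ A), ← spectrum.singleton_sub_eq] at hx
  obtain ⟨_, rfl, r, hr, rfl⟩ := hx
  have := (Real.le_norm_self r).trans (spectrum.norm_le_norm_of_mem hr)
  linarith

namespace Matrix

open scoped ComplexOrder

variable {n 𝕜 : Type*} [Fintype n] [DecidableEq n] [RCLike 𝕜]

theorem PosDef.pow {M : Matrix n n 𝕜} (hM : M.PosDef) (k : ℕ) :
    (M ^ k).PosDef :=
  (hM.posSemidef.pow k).posDef_iff_isUnit.mpr (hM.isUnit.pow k)

theorem IsHermitian.posDef_one_sub_inv_smul {T : Matrix n n ℝ} (hT : T.IsHermitian) {γ : ℝ}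
    (hnorm : ‖T‖ < γ) : (1 - γ⁻¹ • T).PosDef := by
  have hγ : 0 < γ := (norm_nonneg T).trans_lt hnorm
  have hsmul : ‖γ⁻¹ • T‖ < 1 := by
    rwa [norm_smul, Real.norm_of_nonneg (inv_nonneg.mpr hγ.le), inv_mul_lt_one₀ hγ]
  exact IsStrictlyPositive.posDef
    (((IsSelfAdjoint.all γ⁻¹).smul hT.isSelfAdjoint).isStrictlyPositive_one_sub hsmul)

namespace PosSemidef

variable {M : Matrix n n 𝕜}

theorem sqrt_eq_cfcSqrt (hM : M.PosSemidef) : hM.sqrt = CFC.sqrt M := by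
  rw [CFC.sqrt_eq_cfc, cfc_nnreal_eq_real _ M hM.nonneg, hM.1.cfc_eq]
  simp only [IsHermitian.cfc, PosSemidef.sqrt, Real.coe_sqrt, Real.coe_toNNReal']
  simp [Unitary.conjStarAlgAut_apply, Function.comp_def, hM.eigenvalues_nonneg]

theorem sq_sqrt (hM : M.PosSemidef) : hM.sqrt ^ 2 = M := by
  rw [hM.sqrt_eq_cfcSqrt]
  exact CFC.sq_sqrt M hM.nonneg

theorem sqrt_sq (hM : M.PosSemidef) (hM2 : (M ^ 2).PosSemidef) : hM2.sqrt = M := by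
  rw [hM2.sqrt_eq_cfcSqrt]
  exact CFC.sqrt_sq M hM.nonneg

theorem eq_inv_sq_of_sqrt_inv_eq (hM : M.PosSemidef) (hunit : IsUnit M) {B : Matrix n n 𝕜}
    (h : hM.sqrt⁻¹ = B) : M = B⁻¹ ^ 2 := by
  have hsqrt : IsUnit hM.sqrt := (isUnit_pow_iff two_ne_zero).mp (by rwa [hM.sq_sqrt])
  rw [← h, nonsing_inv_nonsing_inv _ ((isUnit_iff_isUnit_det _).mp hsqrt), hM.sq_sqrt]

end PosSemidef

end Matrix

theorem worst_case_covariance_characterization_general {n : ℕ} (γ : ℝ)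
    (T : Matrix (Fin n) (Fin n) ℝ) (hT : T.PosSemidef) (hnorm : ‖T‖ < γ) :
    IsUnit ((1 : Matrix (Fin n) (Fin n) ℝ) - γ⁻¹ • T) ∧
    ((((1 : Matrix (Fin n) (Fin n) ℝ) - γ⁻¹ • T)⁻¹)^2).PosDef ∧
    (∀ hM : ((((1 : Matrix (Fin n) (Fin n) ℝ) - γ⁻¹ • T)⁻¹)^2).PosSemidef,
      (hM.sqrt)⁻¹ = 1 - γ⁻¹ • T) ∧
    ∀ (M' : Matrix (Fin n) (Fin n) ℝ) (hM' : M'.PosSemidef), M'.PosDef →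
      (hM'.sqrt)⁻¹ = 1 - γ⁻¹ • T →
      M' = (((1 : Matrix (Fin n) (Fin n) ℝ) - γ⁻¹ • T)⁻¹)^2 := by
  have hA := hT.isHermitian.posDef_one_sub_inv_smul hnorm
  refine ⟨hA.isUnit, Matrix.PosDef.pow hA.inv 2, fun hM => ?_,
    fun M' hM' hM'pd => hM'.eq_inv_sq_of_sqrt_inv_eq hM'pd.isUnit⟩
  rw [hA.inv.posSemidef.sqrt_sq hM, Matrix.nonsing_inv_nonsing_inv _ hA.det_pos.ne'.isUnit]

theorem worst_case_covariance_characterization {n : ℕ} (γ : ℝ) (hγ : 0 < γ)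
    (T : Matrix (Fin n) (Fin n) ℝ) (hT : T.PosSemidef) (hnorm : ‖T‖ < γ) :
    IsUnit ((1 : Matrix (Fin n) (Fin n) ℝ) - γ⁻¹ • T) ∧
    ((((1 : Matrix (Fin n) (Fin n) ℝ) - γ⁻¹ • T)⁻¹)^2).PosDef ∧
    (∀ hM : ((((1 : Matrix (Fin n) (Fin n) ℝ) - γ⁻¹ • T)⁻¹)^2).PosSemidef,
      (hM.sqrt)⁻¹ = 1 - γ⁻¹ • T) ∧
    ∀ (M' : Matrix (Fin n) (Fin n) ℝ) (hM' : M'.PosSemidef), M'.PosDef →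
      (hM'.sqrt)⁻¹ = 1 - γ⁻¹ • T →
      M' = (((1 : Matrix (Fin n) (Fin n) ℝ) - γ⁻¹ • T)⁻¹)^2 :=
  worst_case_covariance_characterization_general γ T hT hnorm
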